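/- Along the landing flow Ẋ = −Λ(X), one has d/dt f(X(t)) = −‖ψ(X(t))‖² − λ⟨X X^T − I_p, Sym(∇f(X) X^T)⟩, where Sym(M) = (M + M^T)/2 and ψ(X) = Skew(∇f(X)X^T). -/

import Mathlib

/-!
By the chain rule, `d/dt f(X) = ⟨∇f(X), Ẋ⟩ = -⟨∇f(X) Xᵀ, ψ(X) + λ (X Xᵀ - I)⟩`. In the Frobenius
pairing, skew-symmetric and symmetric matrices are orthogonal, so only the skew part `ψ(X)` of
`∇f(X) Xᵀ` sees `ψ(X)`, giving `‖ψ(X)‖²`, and only its symmetric part sees `X Xᵀ - I`.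
-/

open Matrix

/-- Frobenius norm of a square real matrix. -/
noncomputable def frob {p : ℕ} (M : Matrix (Fin p) (Fin p) ℝ) : ℝ :=
  Real.sqrt (Matrix.trace (Mᵀ * M))

namespace Matrix

variable {m n R : Type*}

theorem trace_transpose_mul_self_eq_sum [Fintype m] [Fintype n] [CommSemiring R]
    (M : Matrix m n R) : trace (Mᵀ * M) = ∑ i, ∑ j, M j i ^ 2 := by
  simp [trace, mul_apply, sq]

theorem trace_mul_eq_zero_of_transpose_eq_neg_of_isSymm [Fintype n] [CommRing R]
    [IsAddTorsionFree R] {P Q : Matrix n n R} (hP : Pᵀ = -P) (hQ : Q.IsSymm) :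
    trace (P * Q) = 0 := by
  refine self_eq_neg.mp ?_
  calc trace (P * Q) = trace (Qᵀ * Pᵀ) := by rw [← transpose_mul, trace_transpose]
    _ = -trace (P * Q) := by rw [hQ.eq, hP, mul_neg, trace_neg, trace_mul_comm]

theorem trace_transpose_mul_mul_right [Fintype n] [CommRing R] (G M X : Matrix n n R) :
    trace (Gᵀ * (M * X)) = trace ((G * Xᵀ)ᵀ * M) := by
  rw [← Matrix.mul_assoc, trace_mul_comm, ← Matrix.mul_assoc, transpose_mul, transpose_transpose]

theorem half_smul_add_transpose_add_half_smul_sub_transpose (A : Matrix n n ℝ) :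
    (1/2 : ℝ) • (A + Aᵀ) + (1/2 : ℝ) • (A - Aᵀ) = A := by
  rw [← smul_add, add_add_sub_cancel, ← two_smul ℝ A, smul_smul]; norm_num

theorem transpose_half_smul_sub_transpose (A : Matrix n n ℝ) :
    ((1/2 : ℝ) • (A - Aᵀ))ᵀ = -((1/2 : ℝ) • (A - Aᵀ)) := by
  rw [transpose_smul, transpose_sub, transpose_transpose, ← smul_neg, neg_sub]

theorem isSymm_half_smul_add_transpose (A : Matrix n n ℝ) : ((1/2 : ℝ) • (A + Aᵀ)).IsSymm := by
  rw [IsSymm, transpose_smul, transpose_add, transpose_transpose, add_comm]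

variable [Fintype n]

theorem trace_transpose_mul_eq_skew_of_transpose_eq_neg (A M : Matrix n n ℝ) (hM : Mᵀ = -M) :
    trace (Aᵀ * M) = trace (((1/2 : ℝ) • (A - Aᵀ))ᵀ * M) := by
  have hsymm : trace (((1/2 : ℝ) • (A + Aᵀ))ᵀ * M) = 0 := by
    rw [(isSymm_half_smul_add_transpose A).eq, trace_mul_comm,
      trace_mul_eq_zero_of_transpose_eq_neg_of_isSymm hM (isSymm_half_smul_add_transpose A)]
  conv_lhs => rw [← half_smul_add_transpose_add_half_smul_sub_transpose A, transpose_add,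
    add_mul, trace_add, hsymm, zero_add]

theorem trace_transpose_mul_eq_symm_of_isSymm (A S : Matrix n n ℝ) (hS : S.IsSymm) :
    trace (Aᵀ * S) = trace (Sᵀ * ((1/2 : ℝ) • (A + Aᵀ))) := by
  have hskew : trace (((1/2 : ℝ) • (A - Aᵀ))ᵀ * S) = 0 := by
    rw [transpose_half_smul_sub_transpose, neg_mul, trace_neg,
      trace_mul_eq_zero_of_transpose_eq_neg_of_isSymm (transpose_half_smul_sub_transpose A) hS,
      neg_zero]
  calc trace (Aᵀ * S) = trace (((1/2 : ℝ) • (A + Aᵀ))ᵀ * S) := by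
        conv_lhs => rw [← half_smul_add_transpose_add_half_smul_sub_transpose A, transpose_add,
          add_mul, trace_add, hskew, add_zero]
    _ = trace (Sᵀ * ((1/2 : ℝ) • (A + Aᵀ))) := by
        rw [(isSymm_half_smul_add_transpose A).eq, hS.eq, trace_mul_comm]

end Matrix

theorem frob_nonneg {p : ℕ} (M : Matrix (Fin p) (Fin p) ℝ) : 0 ≤ frob M :=
  Real.sqrt_nonneg _

theorem frob_sq {p : ℕ} (M : Matrix (Fin p) (Fin p) ℝ) : frob M ^ 2 = trace (Mᵀ * M) :=
  Real.sq_sqrt (by rw [trace_transpose_mul_self_eq_sum]; positivity)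

theorem trace_transpose_mul_neg_landing {p : ℕ} (G X : Matrix (Fin p) (Fin p) ℝ) (lam : ℝ) :
    trace (Gᵀ * -(((1/2 : ℝ) • (G * Xᵀ - (G * Xᵀ)ᵀ) + lam • (X * Xᵀ - 1)) * X)) =
      -frob ((1/2 : ℝ) • (G * Xᵀ - (G * Xᵀ)ᵀ)) ^ 2 -
        lam * trace ((X * Xᵀ - 1)ᵀ * ((1/2 : ℝ) • (G * Xᵀ + (G * Xᵀ)ᵀ))) := by
  rw [← neg_mul, trace_transpose_mul_mul_right, mul_neg, mul_add, trace_neg, trace_add,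
    trace_transpose_mul_eq_skew_of_transpose_eq_neg (G * Xᵀ) _
      (transpose_half_smul_sub_transpose _),
    ← frob_sq, Matrix.mul_smul, trace_smul,
    trace_transpose_mul_eq_symm_of_isSymm _ _ ((isSymm_mul_transpose_self X).sub isSymm_one),
    smul_eq_mul]
  ring

def IsFrobGradientAt {p : ℕ} (f : Matrix (Fin p) (Fin p) ℝ → ℝ) (G Y : Matrix (Fin p) (Fin p) ℝ) :
    Prop :=
  ∀ ε > (0:ℝ), ∃ δ > (0:ℝ), ∀ E : Matrix (Fin p) (Fin p) ℝ, frob E ≤ δ →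
    |f (Y + E) - f Y - trace (Gᵀ * E)| ≤ ε * frob E

section Elementwise

open scoped Matrix.Norms.Elementwise
open Asymptotics Filter Topology

variable {p : ℕ}

theorem frob_le_mul_norm (E : Matrix (Fin p) (Fin p) ℝ) : frob E ≤ p * ‖E‖ := by
  have hsum : trace (Eᵀ * E) ≤ (p * ‖E‖) ^ 2 := by
    rw [trace_transpose_mul_self_eq_sum]
    calc ∑ i, ∑ j, E j i ^ 2 ≤ ∑ _i : Fin p, ∑ _j : Fin p, ‖E‖ ^ 2 := by
          refine Finset.sum_le_sum fun i _ => Finset.sum_le_sum fun j _ => ?_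
          have hentry : |E j i| ≤ ‖E‖ := norm_entry_le_entrywise_sup_norm E
          exact sq_le_sq.2 (hentry.trans (le_abs_self _))
      _ = (p * ‖E‖) ^ 2 := by simp; ring
  exact (Real.sqrt_le_sqrt hsum).trans_eq (Real.sqrt_sq (by positivity))

noncomputable def traceTransposeMulL (G : Matrix (Fin p) (Fin p) ℝ) :
    Matrix (Fin p) (Fin p) ℝ →L[ℝ] ℝ :=
  LinearMap.toContinuousLinearMap (traceLinearMap (Fin p) ℝ ℝ ∘ₗ LinearMap.mulLeft ℝ Gᵀ)

-- `frob` is dominated by the elementwise norm, so a `frob`-little-o remainder is a norm-little-o one.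
theorem IsFrobGradientAt.hasFDerivAt {f : Matrix (Fin p) (Fin p) ℝ → ℝ}
    {G Y : Matrix (Fin p) (Fin p) ℝ} (h : IsFrobGradientAt f G Y) :
    HasFDerivAt f (traceTransposeMulL G) Y := by
  have hfrob : frob =O[𝓝 0] fun E : Matrix (Fin p) (Fin p) ℝ => E :=
    .of_bound p <| .of_forall fun E => by
      rw [Real.norm_of_nonneg (frob_nonneg E)]; exact frob_le_mul_norm E
  have hsmall : (fun E => f (Y + E) - f Y - traceTransposeMulL G E) =o[𝓝 0] frob := by
    refine isLittleO_iff.2 fun ε hε => ?_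
    obtain ⟨δ, hδ, hE⟩ := h ε hε
    filter_upwards [(hfrob.trans_tendsto tendsto_id).eventually (ge_mem_nhds hδ)] with E hEδ
    rw [Real.norm_eq_abs, Real.norm_of_nonneg (frob_nonneg E)]
    exact hE E hEδ
  exact hasFDerivAt_iff_isLittleO_nhds_zero.2 (hsmall.trans_isBigO hfrob)

theorem IsFrobGradientAt.hasDerivAt_comp {f : Matrix (Fin p) (Fin p) ℝ → ℝ}
    {X : ℝ → Matrix (Fin p) (Fin p) ℝ} {G V : Matrix (Fin p) (Fin p) ℝ} {t : ℝ}
    (hf : IsFrobGradientAt f G (X t)) (hX : ∀ i j, HasDerivAt (fun s => X s i j) (V i j) t) :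
    HasDerivAt (fun s => f (X s)) (trace (Gᵀ * V)) t :=
  hf.hasFDerivAt.comp_hasDerivAt t (hasDerivAt_pi.2 fun i => hasDerivAt_pi.2 (hX i))

end Elementwise

theorem stmt_16_general (p : ℕ) (f : Matrix (Fin p) (Fin p) ℝ → ℝ)
    (g : Matrix (Fin p) (Fin p) ℝ → Matrix (Fin p) (Fin p) ℝ)
    (hgrad : ∀ X : Matrix (Fin p) (Fin p) ℝ, ∀ ε > (0:ℝ), ∃ δ > (0:ℝ),
      ∀ E : Matrix (Fin p) (Fin p) ℝ, frob E ≤ δ →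
        |f (X + E) - f X - Matrix.trace ((g X)ᵀ * E)| ≤ ε * frob E)
    (lam : ℝ)
    (ψ : Matrix (Fin p) (Fin p) ℝ → Matrix (Fin p) (Fin p) ℝ)
    (hψdef : ∀ Y, ψ Y = (1/2 : ℝ) • (g Y * Yᵀ - (g Y * Yᵀ)ᵀ))
    (X : ℝ → Matrix (Fin p) (Fin p) ℝ)
    (hflow : ∀ t i j, HasDerivAt (fun s => X s i j)
      ((-((ψ (X t) + lam • (X t * (X t)ᵀ - 1)) * X t)) i j) t) :
    ∀ t, HasDerivAt (fun s => f (X s))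
      (-(frob (ψ (X t))) ^ 2 - lam * Matrix.trace ((X t * (X t)ᵀ - 1)ᵀ *
        ((1/2 : ℝ) • (g (X t) * (X t)ᵀ + (g (X t) * (X t)ᵀ)ᵀ)))) t := by
  intro t
  have h := IsFrobGradientAt.hasDerivAt_comp (hgrad (X t)) (hflow t)
  rwa [hψdef, trace_transpose_mul_neg_landing, ← hψdef] at h

/-- Along the landing flow `Ẋ = −Λ(X)`,
`d/dt f(X(t)) = −‖ψ(X(t))‖² − λ ⟨X Xᵀ − I, Sym(∇f(X) Xᵀ)⟩`,
where `ψ(X) = Skew(∇f(X) Xᵀ)`. -/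
theorem stmt_16 (p : ℕ) (f : Matrix (Fin p) (Fin p) ℝ → ℝ)
    (g : Matrix (Fin p) (Fin p) ℝ → Matrix (Fin p) (Fin p) ℝ)
    (hgrad : ∀ X : Matrix (Fin p) (Fin p) ℝ, ∀ ε > (0:ℝ), ∃ δ > (0:ℝ),
      ∀ E : Matrix (Fin p) (Fin p) ℝ, frob E ≤ δ →
        |f (X + E) - f X - Matrix.trace ((g X)ᵀ * E)| ≤ ε * frob E)
    (lam : ℝ) (hlam : 0 < lam)
    (ψ : Matrix (Fin p) (Fin p) ℝ → Matrix (Fin p) (Fin p) ℝ)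
    (hψdef : ∀ Y, ψ Y = (1/2 : ℝ) • (g Y * Yᵀ - (g Y * Yᵀ)ᵀ))
    (X : ℝ → Matrix (Fin p) (Fin p) ℝ)
    (hflow : ∀ t i j, HasDerivAt (fun s => X s i j)
      ((-((ψ (X t) + lam • (X t * (X t)ᵀ - 1)) * X t)) i j) t) :
    ∀ t, HasDerivAt (fun s => f (X s))
      (-(frob (ψ (X t))) ^ 2 - lam * Matrix.trace ((X t * (X t)ᵀ - 1)ᵀ *
        ((1/2 : ℝ) • (g (X t) * (X t)ᵀ + (g (X t) * (X t)ᵀ)ᵀ)))) t :=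
  stmt_16_general p f g hgrad lam ψ hψdef X hflow
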